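/- arXiv:2208.13625 — 3 statements merged into one kernel-verified Lean document; each statement's English description precedes it below -/
import Mathlib

section
/- Let r be admissible and define the Weingarten operator A(V) = −d/ds|₀ N(c(s)) for a curve c in Q(r) with c(0)=(t₀,x₀), c'(0)=V, where N is the unit normal of Q(r). Then A(V) = α(t₀)V + β(t₀)⟨T(t₀,x₀),V⟩T(t₀,x₀) for all V ∈ T_{(t₀,x₀)}Q(r), where α(t) = −1/(r(t)√(1−r'(t)²)) and β(t) = (r''(t)r(t)+r'(t)²−1)/(r(t)(1−r'(t)²)^{3/2}). -/
open scoped RealInnerProductSpace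

/-- The Lorentzian inner product on `ℝ × ℝⁿ⁺¹`. -/
noncomputable def lprod {n : ℕ} (u v : ℝ × EuclideanSpace ℝ (Fin (n+1))) : ℝ :=
  -(u.1 * v.1) + ⟪u.2, v.2⟫

/-- The unit timelike field `T(t,x) = (1/√(1-r'(t)²)) • (1, (r'(t)/r(t)) • x)`. -/
noncomputable def Tvec {n : ℕ} (r : ℝ → ℝ) (p : ℝ × EuclideanSpace ℝ (Fin (n+1))) :
    ℝ × EuclideanSpace ℝ (Fin (n+1)) :=
  (Real.sqrt (1 - (deriv r p.1)^2))⁻¹ • ((1 : ℝ), (deriv r p.1 / r p.1) • p.2)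

/-- The unit normal `N(t,x) = (1/(r(t)√(1-r'(t)²))) • (r'(t)r(t), x)`. -/
noncomputable def Nvec {n : ℕ} (r : ℝ → ℝ) (p : ℝ × EuclideanSpace ℝ (Fin (n+1))) :
    ℝ × EuclideanSpace ℝ (Fin (n+1)) :=
  (r p.1 * Real.sqrt (1 - (deriv r p.1)^2))⁻¹ • (deriv r p.1 * r p.1, p.2)

/-- `α(t) = -1/(r(t)√(1-r'(t)²))`. -/
noncomputable def alphaF (r : ℝ → ℝ) (t : ℝ) : ℝ :=
  -(1 / (r t * Real.sqrt (1 - (deriv r t)^2)))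

/-- `β(t) = (r''(t)r(t) + r'(t)² - 1)/(r(t)(1-r'(t)²)^{3/2})`. -/
noncomputable def betaF (r : ℝ → ℝ) (t : ℝ) : ℝ :=
  (deriv (deriv r) t * r t + (deriv r t)^2 - 1) /
    (r t * Real.sqrt (1 - (deriv r t)^2) ^ 3)

/-- Lemma: `Q(r)` is quasiumbilical: for any curve `c` in `Q(r)` with
`c 0 = (t₀,x₀)` and `c' 0 = V`, the Weingarten operator `A(V) = -(d/ds)|₀ N(c s)`
equals `α(t₀)V + β(t₀)⟨T(t₀,x₀),V⟩T(t₀,x₀)`; i.e. `s ↦ N(c s)` has derivative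
`-(α(t₀) • V + (β(t₀)⟨T,V⟩) • T)` at `0`. -/
theorem stmt10 (n : ℕ) (J : Set ℝ) (hJopen : IsOpen J) (r : ℝ → ℝ)
    (hr : ContDiffOn ℝ (⊤ : ℕ∞) r J)
    (hadm : ∀ t ∈ J, 0 < r t ∧ |deriv r t| < 1)
    (t₀ : ℝ) (ht₀ : t₀ ∈ J) (x₀ : EuclideanSpace ℝ (Fin (n+1)))
    (hx₀ : ‖x₀‖^2 = r t₀ ^ 2)
    (c : ℝ → ℝ × EuclideanSpace ℝ (Fin (n+1)))
    (hcJ : ∀ s, (c s).1 ∈ J) (hcQ : ∀ s, ‖(c s).2‖^2 = r ((c s).1) ^ 2)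
    (hc0 : c 0 = (t₀, x₀))
    (V : ℝ × EuclideanSpace ℝ (Fin (n+1))) (hcV : HasDerivAt c V 0) :
    HasDerivAt (fun s => Nvec r (c s))
      (-(alphaF r t₀ • V
          + (betaF r t₀ * lprod (Tvec r ((t₀, x₀) : ℝ × EuclideanSpace ℝ (Fin (n+1)))) V)
            • Tvec r ((t₀, x₀) : ℝ × EuclideanSpace ℝ (Fin (n+1))))) 0 := by
  obtain ⟨hρ, hρ'⟩ := hadm t₀ ht₀
  set ρ := r t₀ with hρdef
  set ρ1 := deriv r t₀ with hρ1def
  set ρ2 := deriv (deriv r) t₀ with hρ2def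
  have hw2 : (0:ℝ) < 1 - ρ1^2 := by
    have := sq_abs ρ1
    nlinarith [abs_nonneg ρ1]
  set w := Real.sqrt (1 - ρ1^2) with hwdef
  have hw : 0 < w := Real.sqrt_pos.2 hw2
  have hwsq : w^2 = 1 - ρ1^2 := Real.sq_sqrt hw2.le
  have hct : HasDerivAt (fun s => (c s).1) V.1 0 := by
    simpa using hcV.hasFDerivAt.fst.hasDerivAt
  have hcx : HasDerivAt (fun s => (c s).2) V.2 0 := by
    simpa using hcV.hasFDerivAt.snd.hasDerivAt
  have ht1 : (c 0).1 = t₀ := by rw [hc0]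
  have hx1 : (c 0).2 = x₀ := by rw [hc0]
  have hrC : ContDiffAt ℝ (⊤ : ℕ∞) r t₀ := hr.contDiffAt (hJopen.mem_nhds ht₀)
  have hr1 : HasDerivAt r ρ1 t₀ := (hrC.differentiableAt (by simp)).hasDerivAt
  have hdrC : ContDiffOn ℝ (⊤ : ℕ∞) (deriv r) J := hr.deriv_of_isOpen hJopen (by simp)
  have hr2 : HasDerivAt (deriv r) ρ2 t₀ :=
    (((hdrC.contDiffAt (hJopen.mem_nhds ht₀)).differentiableAt (by simp))).hasDerivAt
  -- chain rule pieces
  have hr1' : HasDerivAt r ρ1 ((c 0).1) := ht1 ▸ hr1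
  have hr2' : HasDerivAt (deriv r) ρ2 ((c 0).1) := ht1 ▸ hr2
  have hRt : HasDerivAt (fun s => r ((c s).1)) (ρ1 * V.1) 0 := hr1'.comp 0 hct
  have hDRt : HasDerivAt (fun s => deriv r ((c s).1)) (ρ2 * V.1) 0 := HasDerivAt.comp (h₂ := deriv r) 0 hr2' hct
  -- inner product relation
  have hinner : ⟪x₀, V.2⟫ = ρ * ρ1 * V.1 := by
    have h1 : HasDerivAt (fun s => ⟪(c s).2, (c s).2⟫) (2 * ⟪x₀, V.2⟫) 0 := by
      have := hcx.inner ℝ hcx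
      rw [hx1] at this
      refine this.congr_deriv ?_
      rw [real_inner_comm]; ring
    have h2 : HasDerivAt (fun s => r ((c s).1)^2) (2 * (ρ * ρ1 * V.1)) 0 := by
      have := hRt.pow 2
      rw [ht1] at this
      refine this.congr_deriv ?_; norm_num; ring
    have heq : (fun s => ⟪(c s).2, (c s).2⟫) = fun s => r ((c s).1)^2 := by
      funext s
      rw [real_inner_self_eq_norm_sq, hcQ s]
    rw [heq] at h1
    have := h1.unique h2
    linarith
  -- derivative of sqrt part
  have hu : HasDerivAt (fun s => 1 - (deriv r ((c s).1))^2) (-(2*ρ1*(ρ2*V.1))) 0 := by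
    have := (hDRt.pow 2).const_sub 1
    rw [ht1] at this
    refine this.congr_deriv ?_; rw [← hρ1def]; norm_num
  have hune : (1 : ℝ) - (deriv r ((c 0).1))^2 ≠ 0 := by
    rw [ht1]; exact hw2.ne'
  have hsq : HasDerivAt (fun s => Real.sqrt (1 - (deriv r ((c s).1))^2))
      ((-(2*ρ1*(ρ2*V.1))) / (2*w)) 0 := by
    have := hu.sqrt hune
    rw [ht1] at this
    exact this
  have hden : HasDerivAt (fun s => r ((c s).1) * Real.sqrt (1 - (deriv r ((c s).1))^2))
      (ρ1 * V.1 * w + ρ * ((-(2*ρ1*(ρ2*V.1))) / (2*w))) 0 := by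
    have := hRt.mul hsq
    rw [ht1] at this
    exact this
  have hdenne : r ((c 0).1) * Real.sqrt (1 - (deriv r ((c 0).1))^2) ≠ 0 := by
    rw [ht1]; exact (mul_pos hρ hw).ne'
  have hφ : HasDerivAt (fun s => (r ((c s).1) * Real.sqrt (1 - (deriv r ((c s).1))^2))⁻¹)
      (-(ρ1 * V.1 * w + ρ * ((-(2*ρ1*(ρ2*V.1))) / (2*w))) / (ρ * w)^2) 0 := by
    have := hden.inv hdenne
    rw [ht1] at this
    exact this
  have hg : HasDerivAt (fun s => deriv r ((c s).1) * r ((c s).1))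
      (ρ2 * V.1 * ρ + ρ1 * (ρ1 * V.1)) 0 := by
    have := hDRt.mul hRt
    rw [ht1] at this
    exact this
  have hpair : HasDerivAt (fun s => ((deriv r ((c s).1) * r ((c s).1), (c s).2) :
      ℝ × EuclideanSpace ℝ (Fin (n+1)))) ((ρ2 * V.1 * ρ + ρ1 * (ρ1 * V.1), V.2)) 0 :=
    hg.prodMk hcx
  have hfull := hφ.smul hpair
  rw [ht1, hx1] at hfull
  have hρ0 : ρ ≠ 0 := hρ.ne'
  have hw0 : w ≠ 0 := hw.ne'
  simp only [Nvec]
  refine hfull.congr_deriv ?_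
  simp only [alphaF, betaF, Tvec, lprod]
  rw [← hρ2def, ← hρ1def, ← hρdef, ← hwdef]
  simp only [Prod.smul_mk, smul_eq_mul, mul_one, real_inner_smul_left, hinner]
  rw [Prod.ext_iff]
  constructor
  · simp only [Prod.fst_add, Prod.fst_neg, Prod.smul_fst, smul_eq_mul]
    field_simp
    linear_combination (2*ρ^5*V.1*w^6*((1 - ρ*ρ2)*(w^2 + 1 - ρ1^2) - ρ*ρ2*ρ1^2) + (-2)*V.1*ρ^5*w^8 + (2)*V.1*ρ^6*ρ2*w^8 + (-2)*V.1*ρ^5*w^6 + (2)*V.1*ρ^5*ρ1^2*w^6 + (2)*V.1*ρ^6*ρ2*w^6 + (-1)*V.1*w^2 + (1)*V.1*ρ*ρ2*w^2 + (-1)*V.1 + (1)*V.1*ρ1^2 + (1)*V.1*ρ*ρ2) * hwsq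
  · simp only [Prod.snd_add, Prod.snd_neg, Prod.smul_snd]
    match_scalars
    · field_simp
    · field_simp
      linear_combination (2*ρ^3*ρ1*V.1*w^4*(w^2 + 1 - ρ1^2 - ρ*ρ2) + (-2)*V.1*ρ^3*ρ1*w^6 + (2)*V.1*ρ^4*ρ2*ρ1*w^4 + (-2)*V.1*ρ^3*ρ1*w^4 + (2)*V.1*ρ^3*ρ1^3*w^4 + (-1)*V.1*ρ1*w^2 + (1)*V.1*ρ*ρ2*ρ1 + (-1)*V.1*ρ1 + (1)*V.1*ρ1^3) * hwsq
end

section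
/- Let r(t) = √(t² + at + b) with b > 0 and a² < 4b. Then r is admissible on ℝ (r > 0 and |r'| < 1), and α(t) = −2/√(4b − a²) is constant; in particular the Weingarten operator of Q(r) equals (−2/√(4b−a²))·Id. -/
/-- for `r(t) = √(t² + a t + b)` with `b > 0`, `a² < 4b`, `r` is admissible
on `ℝ` and `α(t) = -2/√(4b - a²)` is constant; moreover `β ≡ 0`, so the Weingarten
operator of `Q(r)` is `(-2/√(4b-a²))·Id`. -/
theorem stmt13 (a b : ℝ) (hb : 0 < b) (hab : a^2 < 4*b)
    (r : ℝ → ℝ) (hr : ∀ t : ℝ, r t = Real.sqrt (t^2 + a*t + b)) :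
    (∀ t : ℝ, 0 < r t ∧ |deriv r t| < 1) ∧
    (∀ t : ℝ, alphaF r t = -2 / Real.sqrt (4*b - a^2)) ∧
    (∀ t : ℝ, betaF r t = 0) := by
  have hd : 0 < 4*b - a^2 := by linarith
  have hq : ∀ t : ℝ, 0 < t^2 + a*t + b := by
    intro t; nlinarith [sq_nonneg (2*t + a)]
  have hqne : ∀ t : ℝ, t^2 + a*t + b ≠ 0 := fun t => (hq t).ne'
  have hrpos : ∀ t, 0 < r t := by
    intro t; rw [hr]; exact Real.sqrt_pos.mpr (hq t)
  have hrsq : ∀ t, r t ^ 2 = t^2 + a*t + b := by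
    intro t; rw [hr]; exact Real.sq_sqrt (hq t).le
  have hfun : (fun s : ℝ => Real.sqrt (s^2 + a*s + b)) = r := (funext hr).symm
  have hr' : ∀ t : ℝ, HasDerivAt r ((2*t+a)/(2 * r t)) t := by
    intro t
    have h1 : HasDerivAt (fun s : ℝ => s^2 + a*s + b) (2*t + a) t := by
      have := ((hasDerivAt_pow 2 t).add ((hasDerivAt_id t).const_mul a)).add_const b
      exact (this.congr_deriv (by norm_num)).congr_of_eventuallyEq (Filter.Eventually.of_forall fun s => rfl)
    have h2 := h1.sqrt (hqne t)
    rw [hr t]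
    exact hfun ▸ h2
  have hderiv : ∀ t, deriv r t = (2*t+a)/(2 * r t) := fun t => (hr' t).deriv
  have hkey : ∀ t, 1 - (deriv r t)^2 = (4*b - a^2)/(4*(t^2+a*t+b)) := by
    intro t
    have h4 : (2 * r t)^2 = 4*(t^2+a*t+b) := by rw [mul_pow, hrsq t]; ring
    have hne := hqne t
    rw [hderiv t, div_pow, h4]
    have hne2 : t*(t+a)+b ≠ 0 := by rw [show t*(t+a)+b = t^2+a*t+b by ring]; exact hne
    field_simp
    ring
  have hprod : ∀ t, r t * Real.sqrt (1 - (deriv r t)^2) = Real.sqrt (4*b - a^2) / 2 := by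
    intro t
    rw [hkey t, hr t, ← Real.sqrt_mul (hq t).le]
    have hne := hqne t
    have : (t^2 + a*t + b) * ((4*b - a^2)/(4*(t^2+a*t+b))) = (4*b - a^2)/4 := by
      have hne2 : t*(t+a)+b ≠ 0 := by rw [show t*(t+a)+b = t^2+a*t+b by ring]; exact hne
      field_simp
    rw [this, Real.sqrt_div hd.le]
    norm_num
  have hr'' : ∀ t : ℝ, HasDerivAt (deriv r)
      ((2 * (2*r t) - (2*t+a) * (2*((2*t+a)/(2*r t))))/(2*r t)^2) t := by
    intro t
    have hnum : HasDerivAt (fun s : ℝ => 2*s + a) 2 t := by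
      simpa using ((hasDerivAt_id t).const_mul 2).add_const a
    have hden : HasDerivAt (fun s : ℝ => 2 * r s) (2 * ((2*t+a)/(2*r t))) t :=
      (hr' t).const_mul 2
    have hdne : 2 * r t ≠ 0 := mul_ne_zero two_ne_zero (hrpos t).ne'
    have h := hnum.div hden hdne
    have hfe : deriv r = fun s => (2*s+a)/(2*r s) := funext hderiv
    rw [hfe]
    exact h
  have hnum0 : ∀ t, deriv (deriv r) t * r t + (deriv r t)^2 - 1 = 0 := by
    intro t
    rw [(hr'' t).deriv, hderiv t]
    have h2 : r t ≠ 0 := (hrpos t).ne'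
    field_simp
    nlinarith [hrsq t]
  refine ⟨fun t => ⟨hrpos t, ?_⟩, fun t => ?_, fun t => ?_⟩
  · have h1 : (deriv r t)^2 < 1 := by
      have := hkey t
      have hq' := hq t
      have hpos : 0 < (4*b - a^2)/(4*(t^2+a*t+b)) := by positivity
      nlinarith
    exact abs_lt.mpr ⟨by nlinarith [sq_nonneg (deriv r t + 1)],
      by nlinarith [sq_nonneg (deriv r t - 1)]⟩
  · rw [alphaF, hprod t]
    have hs : Real.sqrt (4*b - a^2) ≠ 0 := (Real.sqrt_pos.mpr hd).ne'
    field_simp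
  · rw [betaF, show deriv (deriv r) t * r t + (deriv r t)^2 - 1 = 0 from hnum0 t, zero_div]
end

section
/- Let r be admissible with derivative of α given by α'(t) = −(r'(t)/r(t))·β(t). The mean curvature H(t) = α(t) − β(t)/(n+1) of Q(r) is constant if and only if there exists c ∈ ℝ such that β(t) = c/r(t)^{n+1} for all t ∈ J; equivalently r(t)ⁿ(r''(t)r(t) + r'(t)² − 1)/(1 − r'(t)²)^{3/2} = c for all t. -/
private lemma const_of_deriv_zero {J : Set ℝ} (hJconv : Convex ℝ J) {f : ℝ → ℝ}
    (hf : ∀ t ∈ J, HasDerivAt f 0 t) : ∀ x ∈ J, ∀ y ∈ J, f x = f y := by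
  intro x hx y hy
  have h := hJconv.norm_image_sub_le_of_norm_hasDerivWithin_le
    (C := 0) (f' := fun _ => (0 : ℝ)) (fun t ht => (hf t ht).hasDerivWithinAt)
    (fun t ht => by simp) hy hx
  have h2 : ‖f x - f y‖ ≤ 0 := by simpa using h
  have h3 : f x - f y = 0 := norm_le_zero_iff.mp h2
  linarith

/-- for a smooth admissible `r` on the open interval `J` (with
`α' = -(r'/r)β`), the mean curvature `H = α - β/(n+1)` of `Q(r)` is constant iff there is
`c ∈ ℝ` with `β(t) = c/r(t)^{n+1}` on `J`, equivalently
`r(t)ⁿ(r''(t)r(t)+r'(t)²-1)/(1-r'(t)²)^{3/2} = c` on `J`. -/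
theorem stmt14 (n : ℕ) (J : Set ℝ) (hJopen : IsOpen J) (hJconv : Convex ℝ J)
    (r : ℝ → ℝ) (hr : ContDiffOn ℝ (⊤ : ℕ∞) r J)
    (hadm : ∀ t ∈ J, 0 < r t ∧ |deriv r t| < 1)
    (halpha' : ∀ t ∈ J, HasDerivAt (alphaF r) (-(deriv r t / r t) * betaF r t) t) :
    ((∃ H₀ : ℝ, ∀ t ∈ J, alphaF r t - betaF r t / ((n : ℝ) + 1) = H₀) ↔
      (∃ c : ℝ, ∀ t ∈ J, betaF r t = c / r t ^ (n+1))) ∧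
    ((∃ c : ℝ, ∀ t ∈ J, betaF r t = c / r t ^ (n+1)) ↔
      (∃ c : ℝ, ∀ t ∈ J,
        r t ^ n * (deriv (deriv r) t * r t + (deriv r t)^2 - 1)
          / Real.sqrt (1 - (deriv r t)^2) ^ 3 = c)) := by
  -- basic facts
  have hrpos : ∀ t ∈ J, 0 < r t := fun t ht => (hadm t ht).1
  have hrd : ∀ t ∈ J, HasDerivAt r (deriv r t) t := by
    intro t ht
    exact ((hr.contDiffAt (hJopen.mem_nhds ht)).differentiableAt (by simp)).hasDerivAt
  have hspos : ∀ t ∈ J, 0 < Real.sqrt (1 - (deriv r t)^2) := by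
    intro t ht
    have := (hadm t ht).2
    have h1 : (deriv r t)^2 < 1 := by
      have := abs_lt.mp this
      nlinarith [this.1, this.2]
    exact Real.sqrt_pos.mpr (by linarith)
  constructor
  · constructor
    · -- H constant → β = c / r^{n+1}
      rintro ⟨H₀, hH⟩
      rcases Set.eq_empty_or_nonempty J with hJ | ⟨t₀, ht₀⟩
      · exact ⟨0, by simp [hJ]⟩
      set g : ℝ → ℝ := fun t => ((n : ℝ) + 1) * (alphaF r t - H₀) * r t ^ (n+1) with hg
      have hbeta : ∀ t ∈ J, betaF r t = ((n : ℝ) + 1) * (alphaF r t - H₀) := by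
        intro t ht
        have := hH t ht
        have hn1 : ((n : ℝ) + 1) ≠ 0 := by positivity
        field_simp at this ⊢
        linarith
      have hg' : ∀ t ∈ J, HasDerivAt g 0 t := by
        intro t ht
        have h1 : HasDerivAt (fun t => ((n : ℝ) + 1) * (alphaF r t - H₀))
            (((n : ℝ) + 1) * (-(deriv r t / r t) * betaF r t)) t :=
          (((halpha' t ht).sub_const H₀).const_mul _)
        have h2 : HasDerivAt (fun t => r t ^ (n+1))
            ((↑(n+1) : ℝ) * r t ^ n * deriv r t) t := by
          simpa using (hrd t ht).fun_pow (n+1)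
        have h3 := h1.mul h2
        have key : ((n : ℝ) + 1) * (-(deriv r t / r t) * betaF r t) * r t ^ (n+1)
            + ((n : ℝ) + 1) * (alphaF r t - H₀) * ((↑(n+1) : ℝ) * r t ^ n * deriv r t) = 0 := by
          rw [← hbeta t ht]
          have hr0 : r t ≠ 0 := ne_of_gt (hrpos t ht)
          push_cast
          field_simp
          ring
        rw [key] at h3
        exact h3
      obtain c := g t₀
      refine ⟨g t₀, fun t ht => ?_⟩
      have hc : g t = g t₀ := const_of_deriv_zero hJconv hg' t ht t₀ ht₀
      have hr0 : (r t : ℝ) ^ (n+1) ≠ 0 := pow_ne_zero _ (ne_of_gt (hrpos t ht))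
      rw [eq_div_iff hr0, ← hc, hg]
      rw [hbeta t ht]
    · -- β = c / r^{n+1} → H constant
      rintro ⟨c, hc⟩
      rcases Set.eq_empty_or_nonempty J with hJ | ⟨t₀, ht₀⟩
      · exact ⟨0, by simp [hJ]⟩
      set h : ℝ → ℝ := fun t => alphaF r t - (c / r t ^ (n+1)) / ((n : ℝ) + 1) with hh
      have hh' : ∀ t ∈ J, HasDerivAt h 0 t := by
        intro t ht
        have hr0 : r t ≠ 0 := ne_of_gt (hrpos t ht)
        have h2 : HasDerivAt (fun t => r t ^ (n+1))
            ((↑(n+1) : ℝ) * r t ^ n * deriv r t) t := by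
          simpa using (hrd t ht).fun_pow (n+1)
        have h4 : HasDerivAt (fun t => c / r t ^ (n+1))
            ((0 * r t ^ (n+1) - c * ((↑(n+1) : ℝ) * r t ^ n * deriv r t)) / (r t ^ (n+1))^2) t :=
          (hasDerivAt_const t c).div h2 (pow_ne_zero _ hr0)
        have h5 := (halpha' t ht).sub (h4.div_const ((n : ℝ) + 1))
        have key : -(deriv r t / r t) * betaF r t -
            (0 * r t ^ (n+1) - c * ((↑(n+1) : ℝ) * r t ^ n * deriv r t)) / (r t ^ (n+1))^2
              / ((n : ℝ) + 1) = 0 := by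
          rw [hc t ht]
          have hn1 : ((n : ℝ) + 1) ≠ 0 := by positivity
          push_cast
          field_simp
          ring
        rw [key] at h5
        exact h5
      refine ⟨h t₀, fun t ht => ?_⟩
      have : h t = h t₀ := const_of_deriv_zero hJconv hh' t ht t₀ ht₀
      rw [← this, hh]
      rw [hc t ht]
  · -- second equivalence
    constructor <;> rintro ⟨c, hc⟩ <;> refine ⟨c, fun t ht => ?_⟩ <;>
      have hr0 : (0:ℝ) < r t := hrpos t ht <;>
      have hs0 : (0:ℝ) < Real.sqrt (1 - (deriv r t)^2) := hspos t ht <;>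
      have h := hc t ht
    · rw [betaF] at h
      rw [div_eq_div_iff (by positivity) (by positivity)] at h
      rw [div_eq_iff (by positivity)]
      have key : r t * (r t ^ n * (deriv (deriv r) t * r t + deriv r t ^ 2 - 1)) =
          r t * (c * Real.sqrt (1 - deriv r t ^ 2) ^ 3) := by linear_combination h
      exact mul_left_cancel₀ (ne_of_gt hr0) key
    · rw [betaF, div_eq_div_iff (by positivity) (by positivity)]
      rw [div_eq_iff (by positivity)] at h
      linear_combination r t * h
end
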